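/- Let X₁ and X₂ be finite connected CW complexes, let ω₁ and ω₂ be continuous closed 1-forms on X₁ and X₂ respectively, and let ω = p₁*ω₁ + p₂*ω₂ be the closed 1-form on X₁ × X₂ obtained by pulling back along the projections p₁, p₂ and adding. If cat(X₁, ω₁) = 0 then cat(X₁ × X₂, ω) = 0. -/

import Mathlib

open Set

/-- A continuous closed 1-form on a topological space `X`: a collection of
continuous real-valued functions `f i : U i → ℝ` indexed by an open cover
`{U i}` of `X`, such that on overlaps the differences `f i − f j` are locally
constant.  (The functions are recorded as total functions `X → ℝ`; only their
restrictions to `U i` matter.) -/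
structure ClosedOneForm (X : Type) [TopologicalSpace X] : Type 1 where
  ι : Type
  U : ι → Set X
  isOpen : ∀ i, IsOpen (U i)
  covers : ∀ x : X, ∃ i, x ∈ U i
  f : ι → X → ℝ
  cont : ∀ i, ContinuousOn (f i) (U i)
  locConst : ∀ i j, ∀ x ∈ U i ∩ U j, ∃ W, IsOpen W ∧ x ∈ W ∧
    ∀ y ∈ W ∩ (U i ∩ U j), f i y - f j y = f i x - f j x

namespace ClosedOneForm

variable {X Y : Type} [TopologicalSpace X] [TopologicalSpace Y]

/-- `r` is a value of the line integral `∫_γ ω` of the closed 1-form `ω` over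
the path `γ : [a,b] → X`: there is a partition `a = t₀ ≤ ⋯ ≤ t_n = b` with
`γ([t_m, t_{m+1}]) ⊆ U (idx m)` and
`r = Σ_m (f (idx m) (γ t_{m+1}) − f (idx m) (γ t_m))`. -/
def IsPathIntegral (ω : ClosedOneForm X) (γ : ℝ → X) (a b r : ℝ) : Prop :=
  ∃ (n : ℕ) (t : ℕ → ℝ) (idx : ℕ → ω.ι),
    t 0 = a ∧ t n = b ∧ (∀ m < n, t m ≤ t (m + 1)) ∧
    (∀ m < n, ∀ s ∈ Set.Icc (t m) (t (m + 1)), γ s ∈ ω.U (idx m)) ∧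
    r = ∑ m ∈ Finset.range n, (ω.f (idx m) (γ (t (m + 1))) - ω.f (idx m) (γ (t m)))

open scoped Classical in
/-- The line integral `∫_γ ω` over `γ : [a,b] → X` (its value is independent
of all choices; it is defined, via choice, as the common value computed from
any admissible partition). -/
noncomputable def pathIntegral (ω : ClosedOneForm X) (γ : ℝ → X) (a b : ℝ) : ℝ :=
  if h : ∃ r, ω.IsPathIntegral γ a b r then h.choose else 0

/-- A subset `A ⊆ X` is `N`-movable with respect to `ω` if there is a homotopy
`H : A × [0,1] → X` with `H(a,0) = a` and `∫_{t ↦ H(a,t)} ω ≤ −N` for all `a ∈ A`. -/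
def NMovable (ω : ClosedOneForm X) (A : Set X) (N : ℝ) : Prop :=
  ∃ H : X × ℝ → X, ContinuousOn H (A ×ˢ Set.Icc (0 : ℝ) 1) ∧
    (∀ a ∈ A, H (a, 0) = a) ∧
    ∀ a ∈ A, ω.pathIntegral (fun t => H (a, t)) 0 1 ≤ -N

end ClosedOneForm

/-- The inclusion of `V` into `X` is null-homotopic. -/
def NullhomotopicIn (X : Type) [TopologicalSpace X] (V : Set X) : Prop :=
  ∃ (H : X × ℝ → X) (x₀ : X), ContinuousOn H (V ×ˢ Set.Icc (0 : ℝ) 1) ∧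
    (∀ v ∈ V, H (v, 0) = v) ∧ (∀ v ∈ V, H (v, 1) = x₀)

/-- `cat_X(A) ≤ k`: the subset `A` can be covered by `k` open subsets of `X`,
each null-homotopic in `X`. -/
def CatLE (X : Type) [TopologicalSpace X] (A : Set X) (k : ℕ) : Prop :=
  ∃ V : Fin k → Set X, (∀ i, IsOpen (V i)) ∧ A ⊆ ⋃ i, V i ∧
    ∀ i, NullhomotopicIn X (V i)

/-- `cat_X(A)`, the Lusternik–Schnirelmann category of `A` in `X`. -/
noncomputable def catSet (X : Type) [TopologicalSpace X] (A : Set X) : ℕ :=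
  sInf {k | CatLE X A k}

/-- `cat(X)`, the Lusternik–Schnirelmann category of `X`. -/
noncomputable def catSpace (X : Type) [TopologicalSpace X] : ℕ :=
  catSet X Set.univ

namespace ClosedOneForm

/-- `cat(X, ω)`: the minimal `k` such that for every `N > 0` there is a closed
subset `A ⊆ X`, `N`-movable with respect to `ω`, with `cat_X(X − A) ≤ k`. -/
noncomputable def catForm {X : Type} [TopologicalSpace X] (ω : ClosedOneForm X) : ℕ :=
  sInf {k | ∀ N : ℝ, 0 < N →
    ∃ A : Set X, IsClosed A ∧ ω.NMovable A N ∧ CatLE X Aᶜ k}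

end ClosedOneForm

namespace ClosedOneForm

variable {X Y : Type} [TopologicalSpace X] [TopologicalSpace Y]

/-- The pullback `φ*ω` of a closed 1-form along a continuous map `φ : Y → X`,
given by the cover `{φ⁻¹(U)}` and the functions `f_U ∘ φ`. -/
def pullback (ω : ClosedOneForm X) (φ : Y → X) (hφ : Continuous φ) :
    ClosedOneForm Y where
  ι := ω.ι
  U i := φ ⁻¹' ω.U i
  isOpen i := (ω.isOpen i).preimage hφ
  covers y := ω.covers (φ y)
  f i := ω.f i ∘ φ
  cont i := (ω.cont i).comp hφ.continuousOn (fun _ h => h)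
  locConst := by
    intro i j y hy
    obtain ⟨W, hWo, hxW, hW⟩ := ω.locConst i j (φ y) hy
    exact ⟨φ ⁻¹' W, hWo.preimage hφ, hxW, fun z hz => hW (φ z) hz⟩

/-- The sum `ω₁ + ω₂` of two closed 1-forms on `X`, given on the common
refinement of the two covers by the sums of the local functions. -/
def add (ω₁ ω₂ : ClosedOneForm X) : ClosedOneForm X where
  ι := ω₁.ι × ω₂.ι
  U p := ω₁.U p.1 ∩ ω₂.U p.2
  isOpen p := (ω₁.isOpen p.1).inter (ω₂.isOpen p.2)
  covers x := by
    obtain ⟨i, hi⟩ := ω₁.covers x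
    obtain ⟨j, hj⟩ := ω₂.covers x
    exact ⟨(i, j), hi, hj⟩
  f p x := ω₁.f p.1 x + ω₂.f p.2 x
  cont p := ((ω₁.cont p.1).mono Set.inter_subset_left).add
    ((ω₂.cont p.2).mono Set.inter_subset_right)
  locConst := by
    intro p q x hx
    obtain ⟨W₁, h1o, h1x, h1⟩ := ω₁.locConst p.1 q.1 x ⟨hx.1.1, hx.2.1⟩
    obtain ⟨W₂, h2o, h2x, h2⟩ := ω₂.locConst p.2 q.2 x ⟨hx.1.2, hx.2.2⟩
    refine ⟨W₁ ∩ W₂, h1o.inter h2o, ⟨h1x, h2x⟩, fun y hy => ?_⟩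
    have e1 := h1 y ⟨hy.1.1, hy.2.1.1, hy.2.2.1⟩
    have e2 := h2 y ⟨hy.1.2, hy.2.1.2, hy.2.2.2⟩
    try dsimp only at e1 e2 ⊢
    linarith

/-- The closed 1-form `ω + dg` obtained from `ω` by adding the differential of
a continuous function `g : X → ℝ`, i.e. adding `g|_U` to each local function. -/
def addFun (ω : ClosedOneForm X) (g : X → ℝ) (hg : Continuous g) :
    ClosedOneForm X where
  ι := ω.ι
  U := ω.U
  isOpen := ω.isOpen
  covers := ω.covers
  f i x := ω.f i x + g x
  cont i := (ω.cont i).add hg.continuousOn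
  locConst := by
    intro i j x hx
    obtain ⟨W, hWo, hWx, hW⟩ := ω.locConst i j x hx
    refine ⟨W, hWo, hWx, fun y hy => ?_⟩
    have := hW y hy
    try dsimp only at this ⊢
    linarith

end ClosedOneForm

/-- A finite CW structure on a (compact Hausdorff) topological space `X`:
finitely many cells, each given by a characteristic map from the closed unit
ball of a Euclidean space, continuous on the closed ball, injective on the
open ball, whose restriction to the boundary sphere lands in cells of strictly
lower dimension, and such that the images of the open balls partition `X`. -/
structure FinCW (X : Type) [TopologicalSpace X] where
  /-- number of cells -/
  n : ℕ
  /-- dimension of each cell -/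
  dim : Fin n → ℕ
  /-- characteristic map of each cell -/
  φ : (i : Fin n) → EuclideanSpace ℝ (Fin (dim i)) → X
  cont : ∀ i, ContinuousOn (φ i) (Metric.closedBall 0 1)
  injOn : ∀ i, Set.InjOn (φ i) (Metric.ball 0 1)
  sphere_lt : ∀ i, ∀ x ∈ Metric.sphere (0 : EuclideanSpace ℝ (Fin (dim i))) 1,
    ∃ j, dim j < dim i ∧ φ i x ∈ φ j '' Metric.ball 0 1
  partition : ∀ x : X, ∃! p : (i : Fin n) × EuclideanSpace ℝ (Fin (dim i)),
    p.2 ∈ Metric.ball 0 1 ∧ φ p.1 p.2 = x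

/-- The Euler characteristic `χ(X) = Σ_i (−1)^i c_i` of a finite CW structure,
where `c_i` is the number of cells of dimension `i`. -/
def FinCW.euler {X : Type} [TopologicalSpace X] (c : FinCW X) : ℤ :=
  ∑ i : Fin c.n, (-1 : ℤ) ^ (c.dim i)

/-!
If `cat(X₁, ω₁) = 0`, then for every `N` all of `X₁` is `N`-movable. This needs that `X₁` has
finite Lusternik–Schnirelmann category (otherwise `cat(X₁, ω₁)` would be the infimum of the empty
set), which holds for finite CW complexes by induction on the number of cells: an open cell `e` of
top dimension is open and contractible in `X`, and `X` minus the centre of `e` deforms radially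
into the smaller complex `X ∖ e`.

Moving the first coordinate by such a homotopy and keeping the second one fixed makes `X₁ × X₂`
`N`-movable for `p₁*ω₁ + p₂*ω₂`, since along a path with constant second coordinate the integral
of `p₂*ω₂` vanishes. This uses that line integrals are independent of the partition, which follows
by comparing two partitions segment by segment: on a common segment the local primitives differ by
a constant.
-/

namespace ClosedOneForm

variable {X : Type} [TopologicalSpace X] (ω : ClosedOneForm X) {γ : ℝ → X} {a b r : ℝ}

def IsPathIntegralOfLength (γ : ℝ → X) (a b r : ℝ) (n : ℕ) : Prop :=
  ∃ (t : ℕ → ℝ) (idx : ℕ → ω.ι),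
    t 0 = a ∧ t n = b ∧ (∀ m < n, t m ≤ t (m + 1)) ∧
    (∀ m < n, ∀ s ∈ Icc (t m) (t (m + 1)), γ s ∈ ω.U (idx m)) ∧
    r = ∑ m ∈ Finset.range n, (ω.f (idx m) (γ (t (m + 1))) - ω.f (idx m) (γ (t m)))

theorem isPathIntegral_iff :
    ω.IsPathIntegral γ a b r ↔ ∃ n, ω.IsPathIntegralOfLength γ a b r n :=
  Iff.rfl

variable {ω}

theorem isPathIntegralOfLength_zero : ω.IsPathIntegralOfLength γ a b r 0 ↔ a = b ∧ r = 0 := by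
  constructor
  · rintro ⟨t, idx, h0, hn, -, -, hr⟩
    exact ⟨h0 ▸ hn, by simpa using hr⟩
  · rintro ⟨rfl, rfl⟩
    exact ⟨fun _ => a, fun _ => (ω.covers (γ a)).choose, rfl, rfl, by simp, by simp, by simp⟩

theorem isPathIntegralOfLength_succ {n : ℕ} :
    ω.IsPathIntegralOfLength γ a b r (n + 1) ↔ ∃ s j, a ≤ s ∧ MapsTo γ (Icc a s) (ω.U j) ∧
      ω.IsPathIntegralOfLength γ s b (r - (ω.f j (γ s) - ω.f j (γ a))) n := by
  constructor
  · rintro ⟨t, idx, h0, hn, hmono, hU, hr⟩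
    refine ⟨t 1, idx 0, h0 ▸ hmono 0 n.succ_pos, h0 ▸ hU 0 n.succ_pos, fun k => t (k + 1),
      fun k => idx (k + 1), rfl, hn, fun m hm => hmono (m + 1) (by omega),
      fun m hm => hU (m + 1) (by omega), ?_⟩
    rw [hr, Finset.sum_range_succ', h0]
    ring
  · rintro ⟨-, j, has, hj, t, idx, rfl, hn, hmono, hU, hr⟩
    refine ⟨fun k => Nat.casesOn k a t, fun k => Nat.casesOn k j idx, rfl, hn, ?_, ?_, ?_⟩
    · rintro (_ | m) hm
      exacts [has, hmono m (by omega)]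
    · rintro (_ | m) hm
      exacts [hj, hU m (by omega)]
    · rw [Finset.sum_range_succ']
      simp only [Nat.rec_zero]
      linarith

theorem IsPathIntegralOfLength.le {n : ℕ} (h : ω.IsPathIntegralOfLength γ a b r n) : a ≤ b := by
  induction n generalizing a r with
  | zero => exact (isPathIntegralOfLength_zero.mp h).1.le
  | succ n ih =>
    obtain ⟨s, j, has, -, htail⟩ := isPathIntegralOfLength_succ.mp h
    exact has.trans (ih htail)

theorem IsPathIntegralOfLength.eq_zero_of_self {n : ℕ}
    (h : ω.IsPathIntegralOfLength γ a a r n) : r = 0 := by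
  induction n generalizing r with
  | zero => exact (isPathIntegralOfLength_zero.mp h).2
  | succ n ih =>
    obtain ⟨s, j, has, -, htail⟩ := isPathIntegralOfLength_succ.mp h
    obtain rfl := le_antisymm htail.le has
    simpa using ih htail

variable (ω) in
theorem f_sub_f_eq_of_mapsTo {u v : ℝ} (huv : u ≤ v) (hγ : ContinuousOn γ (Icc u v)) {i j : ω.ι}
    (hU : MapsTo γ (Icc u v) (ω.U i ∩ ω.U j)) :
    ω.f i (γ v) - ω.f i (γ u) = ω.f j (γ v) - ω.f j (γ u) := by
  set d : Icc u v → ℝ := fun s => ω.f i (γ s) - ω.f j (γ s)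
  have hd : IsLocallyConstant d := by
    rw [IsLocallyConstant.iff_exists_open]
    rintro ⟨s, hs⟩
    obtain ⟨W, hWo, hsW, hW⟩ := ω.locConst i j (γ s) (hU hs)
    obtain ⟨O, hOo, hO⟩ := continuousOn_iff'.mp hγ W hWo
    have hmem : ∀ y ∈ Icc u v, y ∈ O ↔ γ y ∈ W := fun y hy => by
      simpa [hy] using (Set.ext_iff.mp hO y).symm
    exact ⟨Subtype.val ⁻¹' O, hOo.preimage continuous_subtype_val, (hmem s hs).mpr hsW,
      fun ⟨y, hy⟩ hyO => hW (γ y) ⟨(hmem y hy).mp hyO, hU hy⟩⟩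
  have : PreconnectedSpace (Icc u v) := Subtype.preconnectedSpace isPreconnected_Icc
  have := hd.apply_eq_of_preconnectedSpace ⟨v, right_mem_Icc.mpr huv⟩ ⟨u, left_mem_Icc.mpr huv⟩
  simp only [d] at this
  linarith

theorem IsPathIntegralOfLength.cut {n : ℕ} {s : ℝ} {j : ω.ι}
    (h : ω.IsPathIntegralOfLength γ a b r n) (hγ : ContinuousOn γ (Icc a b))
    (has : a ≤ s) (hsb : s ≤ b) (hj : MapsTo γ (Icc a s) (ω.U j)) :
    ω.IsPathIntegral γ s b (r - (ω.f j (γ s) - ω.f j (γ a))) := by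
  induction n generalizing a r with
  | zero =>
    obtain ⟨rfl, rfl⟩ := isPathIntegralOfLength_zero.mp h
    obtain rfl := le_antisymm hsb has
    exact ⟨0, isPathIntegralOfLength_zero.mpr ⟨rfl, by ring⟩⟩
  | succ n ih =>
    obtain ⟨s', j', has', hj', htail⟩ := isPathIntegralOfLength_succ.mp h
    rcases le_total s s' with hss' | hs's
    · have hΔ := ω.f_sub_f_eq_of_mapsTo has (hγ.mono (Icc_subset_Icc_right hsb))
        (fun u hu => ⟨hj' ⟨hu.1, hu.2.trans hss'⟩, hj hu⟩)
      refine ⟨n + 1, isPathIntegralOfLength_succ.mpr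
        ⟨s', j', hss', hj'.mono (Icc_subset_Icc_left has) Subset.rfl, ?_⟩⟩
      convert htail using 1
      linarith
    · have hΔ := ω.f_sub_f_eq_of_mapsTo has' (hγ.mono (Icc_subset_Icc_right htail.le))
        (fun u hu => ⟨hj' hu, hj ⟨hu.1, hu.2.trans hs's⟩⟩)
      convert ih htail (hγ.mono (Icc_subset_Icc_left has')) hs's
        (hj.mono (Icc_subset_Icc_left has') Subset.rfl) using 1
      linarith

theorem IsPathIntegralOfLength.eq_of_isPathIntegral {n : ℕ} {r' : ℝ}
    (h : ω.IsPathIntegralOfLength γ a b r n) (h' : ω.IsPathIntegral γ a b r')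
    (hγ : ContinuousOn γ (Icc a b)) : r = r' := by
  induction n generalizing a r r' with
  | zero =>
    obtain ⟨rfl, rfl⟩ := isPathIntegralOfLength_zero.mp h
    obtain ⟨n', h'⟩ := (isPathIntegral_iff ω).mp h'
    exact h'.eq_zero_of_self.symm
  | succ n ih =>
    obtain ⟨s, j, has, hj, htail⟩ := isPathIntegralOfLength_succ.mp h
    obtain ⟨n', h'⟩ := (isPathIntegral_iff ω).mp h'
    linarith [ih htail (h'.cut hγ has htail.le hj) (hγ.mono (Icc_subset_Icc_left has))]

theorem pathIntegral_eq (h : ω.IsPathIntegral γ a b r) (hγ : ContinuousOn γ (Icc a b)) :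
    ω.pathIntegral γ a b = r := by
  have hex : ∃ r, ω.IsPathIntegral γ a b r := ⟨r, h⟩
  rw [pathIntegral, dif_pos hex]
  obtain ⟨n, hn⟩ := (isPathIntegral_iff ω).mp hex.choose_spec
  exact hn.eq_of_isPathIntegral h hγ

section Product

variable {X₁ X₂ : Type} [TopologicalSpace X₁] [TopologicalSpace X₂]
  (ω₁ : ClosedOneForm X₁) (ω₂ : ClosedOneForm X₂)

abbrev prod : ClosedOneForm (X₁ × X₂) :=
  (ω₁.pullback Prod.fst continuous_fst).add (ω₂.pullback Prod.snd continuous_snd)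

variable {ω₁ ω₂} {γ : ℝ → X₁} {x₂ : X₂} {a b r : ℝ}

theorem isPathIntegral_prod_iff :
    (ω₁.prod ω₂).IsPathIntegral (fun t => (γ t, x₂)) a b r ↔ ω₁.IsPathIntegral γ a b r := by
  constructor
  · rintro ⟨n, t, idx, h0, hn, hmono, hU, hr⟩
    refine ⟨n, t, fun m => (idx m).1, h0, hn, hmono, fun m hm s hs => (hU m hm s hs).1, ?_⟩
    rw [hr]
    refine Finset.sum_congr rfl fun m _ => ?_
    simp only [prod, add, pullback, Function.comp_apply]
    ring
  · rintro ⟨n, t, idx, h0, hn, hmono, hU, hr⟩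
    obtain ⟨j, hj⟩ := ω₂.covers x₂
    refine ⟨n, t, fun m => (idx m, j), h0, hn, hmono, fun m hm s hs => ⟨hU m hm s hs, hj⟩, ?_⟩
    rw [hr]
    refine Finset.sum_congr rfl fun m _ => ?_
    simp only [prod, add, pullback, Function.comp_apply]
    ring

theorem pathIntegral_prod (hγ : ContinuousOn γ (Icc a b)) :
    (ω₁.prod ω₂).pathIntegral (fun t => (γ t, x₂)) a b = ω₁.pathIntegral γ a b := by
  by_cases h : ∃ r, ω₁.IsPathIntegral γ a b r
  · obtain ⟨r, hr⟩ := h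
    rw [pathIntegral_eq hr hγ,
      pathIntegral_eq (isPathIntegral_prod_iff.mpr hr) (hγ.prodMk continuousOn_const)]
  · have h' : ¬∃ r, (ω₁.prod ω₂).IsPathIntegral (fun t => (γ t, x₂)) a b r := by
      simpa only [isPathIntegral_prod_iff] using h
    rw [pathIntegral, pathIntegral, dif_neg h, dif_neg h']

theorem NMovable.prod {A : Set X₁} {N : ℝ} (h : ω₁.NMovable A N) (ω₂ : ClosedOneForm X₂) :
    (ω₁.prod ω₂).NMovable (A ×ˢ univ) N := by
  obtain ⟨H, hH, hH0, hHN⟩ := h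
  refine ⟨fun p => (H (p.1.1, p.2), p.1.2), ?_, fun x hx => by simp [hH0 x.1 hx.1], ?_⟩
  · refine (hH.comp (by fun_prop) ?_).prodMk (by fun_prop)
    exact fun p hp => ⟨hp.1.1, hp.2⟩
  · intro x hx
    have hγ : ContinuousOn (fun t => H (x.1, t)) (Icc 0 1) :=
      hH.comp (by fun_prop) fun t ht => ⟨hx.1, ht⟩
    exact (pathIntegral_prod (ω₂ := ω₂) (x₂ := x.2) hγ).trans_le (hHN x.1 hx.1)

end Product

end ClosedOneForm

theorem ContinuousMap.Homotopic.nullhomotopic {X Y : Type*} [TopologicalSpace X]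
    [TopologicalSpace Y] {f g : C(X, Y)} (hfg : f.Homotopic g) (hg : g.Nullhomotopic) :
    f.Nullhomotopic :=
  hg.imp fun _ => hfg.trans

theorem nullhomotopicIn_iff {X : Type} [TopologicalSpace X] {V : Set X} :
    NullhomotopicIn X V ↔ ((ContinuousMap.id X).restrict V).Nullhomotopic := by
  constructor
  · rintro ⟨H, x₀, hH, hH0, hH1⟩
    exact ⟨x₀, ⟨{
      toFun p := H (p.2, p.1)
      continuous_toFun := hH.comp_continuous (by fun_prop) fun p => ⟨p.2.2, p.1.2⟩
      map_zero_left v := hH0 v v.2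
      map_one_left v := hH1 v v.2 }⟩⟩
  · rintro ⟨x₀, ⟨F⟩⟩
    classical
    refine ⟨fun p => if h : p.1 ∈ V then F (projIcc 0 1 zero_le_one p.2, ⟨p.1, h⟩) else p.1, x₀,
      ?_, fun v hv => by simp [hv], fun v hv => by simp [hv]⟩
    rw [continuousOn_iff_continuous_domRestrict]
    refine (F.continuous.comp (f := fun p : ↥(V ×ˢ Icc (0 : ℝ) 1) =>
      (projIcc 0 1 zero_le_one p.1.2, (⟨p.1.1, p.2.1⟩ : V))) (by fun_prop)).congr fun p => ?_
    simp [p.2.1]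

namespace FinCW

variable {X : Type} [TopologicalSpace X] {c : FinCW X} {i : Fin c.n}

variable (c) in
def openCell (i : Fin c.n) : Set X := c.φ i '' Metric.ball 0 1

theorem index_eq_of_φ_eq {j j' : Fin c.n} {b : EuclideanSpace ℝ (Fin (c.dim j))}
    {b' : EuclideanSpace ℝ (Fin (c.dim j'))} (hb : b ∈ Metric.ball 0 1)
    (hb' : b' ∈ Metric.ball 0 1) (h : c.φ j b = c.φ j' b') : j = j' := by
  obtain ⟨p, -, hp⟩ := c.partition (c.φ j b)
  exact congrArg Sigma.fst ((hp ⟨j, b⟩ ⟨hb, rfl⟩).trans (hp ⟨j', b'⟩ ⟨hb', h.symm⟩).symm)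

theorem φ_sphere_notMem_openCell (hmax : ∀ k, c.dim k ≤ c.dim i) (j : Fin c.n)
    {b : EuclideanSpace ℝ (Fin (c.dim j))} (hb : b ∈ Metric.sphere 0 1) :
    c.φ j b ∉ c.openCell i := by
  rintro ⟨b', hb', he⟩
  obtain ⟨k, hk, bk, hbk, hek⟩ := c.sphere_lt j b hb
  obtain rfl := index_eq_of_φ_eq hbk hb' (hek.trans he.symm)
  exact (hmax j).not_gt hk

theorem φ_notMem_openCell (hmax : ∀ k, c.dim k ≤ c.dim i) {j : Fin c.n} (hj : j ≠ i)
    {b : EuclideanSpace ℝ (Fin (c.dim j))} (hb : b ∈ Metric.closedBall 0 1) :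
    c.φ j b ∉ c.openCell i := by
  rcases (Metric.mem_closedBall.mp hb).lt_or_eq with hb | hb
  · rintro ⟨b', hb', he⟩
    exact hj (index_eq_of_φ_eq (Metric.mem_ball.mpr hb) hb' he.symm)
  · exact φ_sphere_notMem_openCell hmax j (Metric.mem_sphere.mpr hb)

section CellHomotopy

variable {g : EuclideanSpace ℝ (Fin (c.dim i)) × ℝ → EuclideanSpace ℝ (Fin (c.dim i))}

variable (c i g) in
open scoped Classical in
noncomputable def cellHomotopy (p : X × ℝ) : X :=
  if h : p.1 ∈ c.openCell i then c.φ i (g (Classical.choose h, p.2)) else p.1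

theorem cellHomotopy_φ {b : EuclideanSpace ℝ (Fin (c.dim i))} (hb : b ∈ Metric.ball 0 1)
    (t : ℝ) : c.cellHomotopy i g (c.φ i b, t) = c.φ i (g (b, t)) := by
  have h : c.φ i b ∈ c.openCell i := ⟨b, hb, rfl⟩
  rw [cellHomotopy, dif_pos h]
  obtain ⟨hb', he⟩ := Classical.choose_spec h
  rw [c.injOn i hb' hb he]

theorem cellHomotopy_of_notMem {x : X} (hx : x ∉ c.openCell i) (t : ℝ) :
    c.cellHomotopy i g (x, t) = x :=
  dif_neg hx

end CellHomotopy

variable (c i) in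
noncomputable def otherCells : Fin (Fintype.card {j // j ≠ i}) ≃ {j // j ≠ i} :=
  (Fintype.equivFin _).symm

variable (c) in
open scoped Classical in
/-- The characteristic maps are extended arbitrarily outside the closed ball, so that they land
in the subspace. -/
noncomputable def complOpenCell (hmax : ∀ k, c.dim k ≤ c.dim i) : FinCW ↥(c.openCell i)ᶜ where
  n := Fintype.card {j // j ≠ i}
  dim l := c.dim (otherCells c i l)
  φ l b :=
    if hb : b ∈ Metric.closedBall 0 1 then
      ⟨c.φ (otherCells c i l) b, φ_notMem_openCell hmax (otherCells c i l).2 hb⟩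
    else
      ⟨c.φ (otherCells c i l) 0,
        φ_notMem_openCell hmax (otherCells c i l).2 (Metric.mem_closedBall_self zero_le_one)⟩
  cont l := Topology.IsInducing.subtypeVal.continuousOn_iff.mpr <|
    (c.cont _).congr fun b hb => by simp only [Function.comp_apply, dif_pos hb]
  injOn l b hb b' hb' h := by
    have h' := congrArg Subtype.val h
    simp only [Metric.ball_subset_closedBall hb, Metric.ball_subset_closedBall hb', dif_pos] at h'
    exact c.injOn _ hb hb' h'
  sphere_lt l b hb := by
    obtain ⟨k, hk, bk, hbk, hek⟩ := c.sphere_lt (otherCells c i l) b hb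
    have hki : k ≠ i := by
      rintro rfl
      exact (hmax _).not_gt hk
    obtain ⟨l', rfl⟩ : ∃ l', (otherCells c i l' : Fin c.n) = k :=
      ⟨(otherCells c i).symm ⟨k, hki⟩, by simp⟩
    refine ⟨l', hk, bk, hbk, Subtype.ext ?_⟩
    simpa [Metric.ball_subset_closedBall hbk, Metric.sphere_subset_closedBall hb] using hek
  partition x := by
    obtain ⟨⟨j, b⟩, ⟨hb, hbx⟩, hu⟩ := c.partition x
    have hji : j ≠ i := by
      rintro rfl
      exact x.2 ⟨b, hb, hbx⟩
    obtain ⟨l, rfl⟩ : ∃ l, (otherCells c i l : Fin c.n) = j :=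
      ⟨(otherCells c i).symm ⟨j, hji⟩, by simp⟩
    refine ⟨⟨l, b⟩, ⟨hb, Subtype.ext ?_⟩, ?_⟩
    · simpa [Metric.ball_subset_closedBall hb] using hbx
    · rintro ⟨l', b'⟩ ⟨hb', hx'⟩
      have h' := congrArg Subtype.val hx'
      simp only [Metric.ball_subset_closedBall hb', dif_pos] at h'
      have hsig := hu ⟨_, b'⟩ ⟨hb', h'⟩
      obtain rfl : l' = l :=
        (otherCells c i).injective (Subtype.ext (congrArg Sigma.fst hsig))
      obtain rfl : b' = b := eq_of_heq (Sigma.mk.inj_iff.mp hsig).2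
      rfl

theorem complOpenCell_n_lt (hmax : ∀ k, c.dim k ≤ c.dim i) : (c.complOpenCell hmax).n < c.n :=
  (Fintype.card_subtype_lt (p := (· ≠ i)) (x := i) (by simp)).trans_eq (Fintype.card_fin _)

section T2

variable [T2Space X]

theorem isOpen_openCell (hmax : ∀ k, c.dim k ≤ c.dim i) : IsOpen (c.openCell i) := by
  have : (c.openCell i)ᶜ = ⋃ j : {j // j ≠ i}, c.φ j '' Metric.closedBall 0 1 := by
    ext x
    refine ⟨fun hx => ?_, ?_⟩
    · obtain ⟨⟨j, b⟩, ⟨hb, rfl⟩, -⟩ := c.partition x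
      have hj : j ≠ i := by rintro rfl; exact hx ⟨b, hb, rfl⟩
      exact mem_iUnion.mpr ⟨⟨j, hj⟩, b, Metric.ball_subset_closedBall hb, rfl⟩
    · rintro ⟨-, ⟨⟨j, hj⟩, rfl⟩, b, hb, rfl⟩
      exact φ_notMem_openCell hmax hj hb
  rw [← isClosed_compl_iff, this]
  exact isClosed_iUnion_of_finite fun j =>
    ((isCompact_closedBall _ _).image_of_continuousOn (c.cont j)).isClosed

variable (c) in
/-- `X × ℝ` is a quotient of `∐ⱼ Dⱼ × ℝ`, `Dⱼ` the closed balls: the map is closed because the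
balls are compact. -/
theorem isOpen_of_isOpen_preimage_cell {S : Set (X × ℝ)}
    (h : ∀ j, IsOpen ((fun p : Metric.closedBall (0 : EuclideanSpace ℝ (Fin (c.dim j))) 1 × ℝ =>
      (c.φ j p.1, p.2)) ⁻¹' S)) : IsOpen S := by
  have : ∀ j, CompactSpace (Metric.closedBall (0 : EuclideanSpace ℝ (Fin (c.dim j))) 1) :=
    fun j => isCompact_iff_compactSpace.mp (isCompact_closedBall _ _)
  let q : (Σ j, Metric.closedBall (0 : EuclideanSpace ℝ (Fin (c.dim j))) 1) → X :=
    fun p => c.φ p.1 p.2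
  have hq : Continuous q := continuous_sigma fun j => (c.cont j).domRestrict
  have hqs : Function.Surjective q := fun x => by
    obtain ⟨⟨j, b⟩, ⟨hb, hbx⟩, -⟩ := c.partition x
    exact ⟨⟨j, b, Metric.ball_subset_closedBall hb⟩, hbx⟩
  have hQ : Topology.IsQuotientMap (Prod.map q (id : ℝ → ℝ)) :=
    (hq.isProperMap.prodMap isProperMap_id).isClosedMap.isQuotientMap
      (hq.prodMap continuous_id) (hqs.prodMap Function.surjective_id)
  rw [← hQ.isOpen_preimage, ← Homeomorph.sigmaProdDistrib.symm.isOpen_preimage, isOpen_sigma_iff]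
  exact h

variable (c) in
theorem continuousOn_of_forall_cell {Z : Type} [TopologicalSpace Z] {f : X × ℝ → Z} {U : Set X}
    (hU : IsOpen U) (hf : ∀ j, ContinuousOn (fun p : EuclideanSpace ℝ (Fin (c.dim j)) × ℝ =>
      f (c.φ j p.1, p.2)) ((Metric.closedBall 0 1 ∩ c.φ j ⁻¹' U) ×ˢ univ)) :
    ContinuousOn f (U ×ˢ univ) := by
  rw [continuousOn_open_iff (hU.prod isOpen_univ)]
  intro O hO
  refine c.isOpen_of_isOpen_preimage_cell fun j => ?_
  let e : Metric.closedBall (0 : EuclideanSpace ℝ (Fin (c.dim j))) 1 × ℝ →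
      EuclideanSpace ℝ (Fin (c.dim j)) × ℝ := fun p => (p.1, p.2)
  have hφ : Continuous fun p : Metric.closedBall (0 : EuclideanSpace ℝ (Fin (c.dim j))) 1 × ℝ =>
      c.φ j p.1 := (c.cont j).domRestrict.comp continuous_fst
  have hfe : ContinuousOn ((fun p => f (c.φ j p.1, p.2)) ∘ e) ((fun p => c.φ j p.1) ⁻¹' U) :=
    (hf j).comp (by fun_prop) fun p hp => ⟨⟨p.1.2, hp⟩, trivial⟩
  convert hfe.isOpen_inter_preimage (hU.preimage hφ) hO using 1
  ext p
  simp [e]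

/-- Points of the boundary sphere must stay fixed, since the cell map identifies them with points
of lower cells, which `cellHomotopy` does not move. -/
theorem continuousOn_cellHomotopy (hmax : ∀ k, c.dim k ≤ c.dim i)
    {g : EuclideanSpace ℝ (Fin (c.dim i)) × ℝ → EuclideanSpace ℝ (Fin (c.dim i))}
    {K : Set (EuclideanSpace ℝ (Fin (c.dim i)))} (hK : IsCompact K)
    (hKball : K ⊆ Metric.closedBall 0 1)
    (hg : ContinuousOn g ((Metric.closedBall 0 1 \ K) ×ˢ univ))
    (hgmaps : MapsTo g ((Metric.closedBall 0 1 \ K) ×ˢ univ) (Metric.closedBall 0 1))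
    (hgfix : ∀ b ∈ Metric.sphere 0 1 \ K, ∀ t, g (b, t) = b) :
    ContinuousOn (c.cellHomotopy i g) ((c.φ i '' K)ᶜ ×ˢ univ) := by
  have hU : IsOpen (c.φ i '' K)ᶜ :=
    (hK.image_of_continuousOn ((c.cont i).mono hKball)).isClosed.isOpen_compl
  refine c.continuousOn_of_forall_cell hU fun j => ?_
  by_cases hj : j = i
  · subst hj
    have hD : (Metric.closedBall 0 1 ∩ c.φ j ⁻¹' (c.φ j '' K)ᶜ) ×ˢ (univ : Set ℝ) ⊆
        (Metric.closedBall 0 1 \ K) ×ˢ univ :=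
      prod_mono (fun b hb => ⟨hb.1, fun hbK => hb.2 ⟨b, hbK, rfl⟩⟩) subset_rfl
    refine ((c.cont j).comp (hg.mono hD) (hgmaps.mono hD subset_rfl)).congr ?_
    rintro ⟨b, t⟩ ⟨⟨hb, hbK⟩, -⟩
    rcases (Metric.mem_closedBall.mp hb).lt_or_eq with hb' | hb'
    · exact cellHomotopy_φ (Metric.mem_ball.mpr hb') t
    · have hs : b ∈ Metric.sphere 0 1 := Metric.mem_sphere.mpr hb'
      rw [Function.comp_apply, hgfix b ⟨hs, fun h => hbK ⟨b, h, rfl⟩⟩ t]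
      exact cellHomotopy_of_notMem (φ_sphere_notMem_openCell hmax j hs) t
  · refine ((c.cont j).comp continuousOn_fst fun p hp => hp.1.1).congr ?_
    rintro ⟨b, t⟩ ⟨⟨hb, -⟩, -⟩
    exact cellHomotopy_of_notMem (φ_notMem_openCell hmax hj hb) t

theorem nullhomotopicIn_openCell (hmax : ∀ k, c.dim k ≤ c.dim i) :
    NullhomotopicIn X (c.openCell i) := by
  let g : EuclideanSpace ℝ (Fin (c.dim i)) × ℝ → EuclideanSpace ℝ (Fin (c.dim i)) :=
    fun p => (1 - (projIcc (0 : ℝ) 1 zero_le_one p.2 : ℝ)) • p.1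
  have hgmaps : MapsTo g ((Metric.closedBall 0 1 \ Metric.sphere 0 1) ×ˢ univ)
      (Metric.closedBall 0 1) := by
    rintro ⟨b, t⟩ ⟨⟨hb, -⟩, -⟩
    have ht := (projIcc (0 : ℝ) 1 zero_le_one t).2
    rw [mem_closedBall_zero_iff] at hb ⊢
    rw [norm_smul, Real.norm_eq_abs, abs_of_nonneg (by linarith [ht.2])]
    exact mul_le_one₀ (by linarith [ht.1]) (norm_nonneg b) hb
  refine ⟨c.cellHomotopy i g, c.φ i 0, ?_, ?_, ?_⟩
  · refine (continuousOn_cellHomotopy hmax (isCompact_sphere 0 1) Metric.sphere_subset_closedBall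
      (by fun_prop) hgmaps fun b hb => (hb.2 hb.1).elim).mono ?_
    rintro ⟨x, t⟩ ⟨hx, -⟩
    exact ⟨fun ⟨b, hb, hbx⟩ => φ_sphere_notMem_openCell hmax i hb (hbx ▸ hx), trivial⟩
  · rintro _ ⟨b, hb, rfl⟩
    simp [cellHomotopy_φ hb, g]
  · rintro _ ⟨b, hb, rfl⟩
    simp [cellHomotopy_φ hb, g]

/-- Radial projection from the centre of the top cell onto its boundary. -/
theorem exists_homotopy_compl_openCell (hmax : ∀ k, c.dim k ≤ c.dim i) :
    ∃ R : X × ℝ → X, ContinuousOn R ({c.φ i 0}ᶜ ×ˢ univ) ∧ (∀ x, R (x, 0) = x) ∧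
      ∀ x ≠ c.φ i 0, R (x, 1) ∉ c.openCell i := by
  let s : ℝ → ℝ := fun t => projIcc (0 : ℝ) 1 zero_le_one t
  have hs : ∀ t, 0 ≤ s t ∧ s t ≤ 1 := fun t => (projIcc (0 : ℝ) 1 zero_le_one t).2
  let g : EuclideanSpace ℝ (Fin (c.dim i)) × ℝ → EuclideanSpace ℝ (Fin (c.dim i)) :=
    fun p => ((1 - s p.2) + s p.2 * ‖p.1‖⁻¹) • p.1
  have hnorm : ∀ b ≠ 0, ∀ t, ‖g (b, t)‖ = (1 - s t) * ‖b‖ + s t := fun b hb t => by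
    have hb' : 0 < ‖b‖ := norm_pos_iff.mpr hb
    have hc : 0 ≤ (1 - s t) + s t * ‖b‖⁻¹ :=
      add_nonneg (by linarith [hs t]) (mul_nonneg (hs t).1 (by positivity))
    rw [norm_smul, Real.norm_eq_abs, abs_of_nonneg hc]
    field_simp
  have hgc : ContinuousOn g ((Metric.closedBall 0 1 \ {0}) ×ˢ univ) := by
    have : Continuous s := continuous_subtype_val.comp continuous_projIcc
    refine ContinuousOn.fun_smul ?_ continuousOn_fst
    exact (by fun_prop : Continuous fun p : _ × ℝ => 1 - s p.2).continuousOn.add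
      ((this.comp continuous_snd).continuousOn.mul
        ((continuous_norm.comp continuous_fst).continuousOn.inv₀
          fun p hp => norm_ne_zero_iff.mpr hp.1.2))
  have hgmaps : MapsTo g ((Metric.closedBall 0 1 \ {0}) ×ˢ univ) (Metric.closedBall 0 1) := by
    rintro ⟨b, t⟩ ⟨⟨hb, hb0⟩, -⟩
    rw [mem_closedBall_zero_iff] at hb ⊢
    rw [hnorm b hb0 t]
    nlinarith [hs t]
  have hgfix : ∀ b ∈ Metric.sphere 0 1 \ {0}, ∀ t, g (b, t) = b := fun b hb t => by
    simp [g, mem_sphere_zero_iff_norm.mp hb.1]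
  refine ⟨c.cellHomotopy i g, ?_, fun x => ?_, fun x hx => ?_⟩
  · simpa using continuousOn_cellHomotopy hmax isCompact_singleton
      (singleton_subset_iff.mpr (Metric.mem_closedBall_self zero_le_one)) hgc hgmaps hgfix
  · by_cases hx : x ∈ c.openCell i
    · obtain ⟨b, hb, rfl⟩ := hx
      simp [cellHomotopy_φ hb, g, s]
    · exact cellHomotopy_of_notMem hx 0
  · by_cases hx' : x ∈ c.openCell i
    · obtain ⟨b, hb, rfl⟩ := hx'
      have hb0 : b ≠ 0 := by rintro rfl; exact hx rfl
      rw [cellHomotopy_φ hb]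
      refine φ_sphere_notMem_openCell hmax i (mem_sphere_zero_iff_norm.mpr ?_)
      simp [hnorm b hb0, s]
    · rwa [cellHomotopy_of_notMem hx' 1]

/-- `eᵢ` is contractible in `X`, and `X ∖ {centre of eᵢ}` deforms into `X ∖ eᵢ`, where the
categorical cover of `X ∖ eᵢ` pulls back. -/
theorem catLE_univ_succ (hmax : ∀ k, c.dim k ≤ c.dim i) {k : ℕ}
    (h : CatLE ↥(c.openCell i)ᶜ univ k) : CatLE X univ (k + 1) := by
  obtain ⟨R, hR, hR0, hR1⟩ := exists_homotopy_compl_openCell hmax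
  obtain ⟨V', hV'open, hV'cover, hV'null⟩ := h
  let W : Set X := {c.φ i 0}ᶜ
  let r : C(W, ↥(c.openCell i)ᶜ) :=
    ⟨fun w => ⟨R (w, 1), hR1 w w.2⟩,
      (hR.comp_continuous (by fun_prop) fun w => ⟨w.2, trivial⟩).subtype_mk _⟩
  have hr : ((ContinuousMap.id X).restrict W).Homotopic
      (((ContinuousMap.id X).restrict _).comp r) :=
    ⟨{ toFun p := R (p.2, p.1)
       continuous_toFun := hR.comp_continuous (by fun_prop) fun p => ⟨p.2.2, trivial⟩
       map_zero_left w := hR0 w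
       map_one_left w := rfl }⟩
  let V (l : Fin k) : Set X := Subtype.val '' (r ⁻¹' V' l)
  refine ⟨Fin.cons (c.openCell i) V, fun l => ?_, fun x _ => ?_, fun l => ?_⟩
  · cases l using Fin.cases
    · exact isOpen_openCell hmax
    exact isOpen_compl_singleton.isOpenMap_subtype_val _ ((hV'open _).preimage r.continuous)
  · by_cases hx : x = c.φ i 0
    · exact mem_iUnion.mpr ⟨0, 0, Metric.mem_ball_self one_pos, hx.symm⟩
    · obtain ⟨l, hl⟩ := mem_iUnion.mp (hV'cover (mem_univ (r ⟨x, hx⟩)))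
      exact mem_iUnion.mpr ⟨l.succ, ⟨x, hx⟩, hl, rfl⟩
  · cases l using Fin.cases with
    | zero => exact nullhomotopicIn_openCell hmax
    | succ l => ?_
    have hVW : V l ⊆ W := Subtype.coe_image_subset W _
    have hρ : ∀ v : V l, r (inclusion hVW v) ∈ V' l := by
      rintro ⟨_, w, hw, rfl⟩
      exact hw
    let ρ : C(V l, V' l) := ⟨fun v => ⟨r (inclusion hVW v), hρ v⟩, by fun_prop⟩
    refine nullhomotopicIn_iff.mpr
      ((hr.comp (.refl (ContinuousMap.inclusion hVW))).nullhomotopic ?_)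
    exact ((nullhomotopicIn_iff.mp (hV'null l)).comp_left ρ).comp_right
      ((ContinuousMap.id X).restrict _)

theorem exists_catLE_univ [CompactSpace X] (c : FinCW X) : ∃ k, CatLE X univ k := by
  induction hn : c.n using Nat.strong_induction_on generalizing X with
  | _ n ih =>
    rcases isEmpty_or_nonempty (Fin c.n) with hX | hX
    · refine ⟨0, Fin.elim0, fun l => l.elim0, fun x _ => ?_, fun l => l.elim0⟩
      exact (IsEmpty.false (c.partition x).exists.choose.1).elim
    · obtain ⟨i, hmax⟩ := Finite.exists_max c.dim
      have : CompactSpace ↥(c.openCell i)ᶜ :=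
        isCompact_iff_compactSpace.mp (isOpen_openCell hmax).isClosed_compl.isCompact
      obtain ⟨k, hk⟩ := ih _ (hn ▸ complOpenCell_n_lt hmax) (c.complOpenCell hmax) rfl
      exact ⟨k + 1, catLE_univ_succ hmax hk⟩

end T2

end FinCW

theorem catLE_empty (X : Type) [TopologicalSpace X] : CatLE X ∅ 0 :=
  ⟨Fin.elim0, fun i => i.elim0, empty_subset _, fun i => i.elim0⟩

namespace ClosedOneForm

variable {X : Type} [TopologicalSpace X] {ω : ClosedOneForm X}

theorem nMovable_empty (N : ℝ) : ω.NMovable ∅ N :=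
  ⟨Prod.fst, by simp, by simp, by simp⟩

theorem catForm_eq_zero_of_nMovable_univ (h : ∀ N, 0 < N → ω.NMovable univ N) :
    ω.catForm = 0 :=
  Nat.sInf_eq_zero.mpr <| Or.inl fun N hN =>
    ⟨univ, isClosed_univ, h N hN, by simpa using catLE_empty X⟩

theorem nMovable_univ_of_catForm_eq_zero (hcat : ∃ k, CatLE X univ k) (h : ω.catForm = 0)
    {N : ℝ} (hN : 0 < N) : ω.NMovable univ N := by
  rcases Nat.sInf_eq_zero.mp h with h0 | hempty
  · obtain ⟨A, -, hA, V, -, hcover, -⟩ := h0 N hN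
    rwa [show A = univ by simpa using hcover] at hA
  · obtain ⟨k, hk⟩ := hcat
    have hmem : k ∈ {k | ∀ N : ℝ, 0 < N →
        ∃ A : Set X, IsClosed A ∧ ω.NMovable A N ∧ CatLE X Aᶜ k} :=
      fun N _ => ⟨∅, isClosed_empty, nMovable_empty N, by simpa using hk⟩
    simp [hempty] at hmem

end ClosedOneForm

theorem catForm_product_zero_general
    (X₁ X₂ : Type) [TopologicalSpace X₁] [TopologicalSpace X₂]
    [T2Space X₁] [CompactSpace X₁]
    (c₁ : FinCW X₁)
    (ω₁ : ClosedOneForm X₁) (ω₂ : ClosedOneForm X₂)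
    (h : ω₁.catForm = 0) :
    (((ω₁.pullback (Prod.fst : X₁ × X₂ → X₁) continuous_fst)).add
      (ω₂.pullback (Prod.snd : X₁ × X₂ → X₂) continuous_snd)).catForm = 0 := by
  refine ClosedOneForm.catForm_eq_zero_of_nMovable_univ fun N hN => ?_
  have h₁ := ClosedOneForm.nMovable_univ_of_catForm_eq_zero c₁.exists_catLE_univ h hN
  simpa using h₁.prod ω₂

/-- **Pairs of category zero form an ideal.**  Let `X₁`, `X₂` be finite
connected CW complexes with continuous closed 1-forms `ω₁`, `ω₂`, and let
`ω = p₁*ω₁ + p₂*ω₂` on `X₁ × X₂`.  If `cat(X₁, ω₁) = 0` then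
`cat(X₁ × X₂, ω) = 0`. -/
theorem catForm_product_zero
    (X₁ X₂ : Type) [TopologicalSpace X₁] [TopologicalSpace X₂]
    [T2Space X₁] [T2Space X₂] [CompactSpace X₁] [CompactSpace X₂]
    [ConnectedSpace X₁] [ConnectedSpace X₂]
    (c₁ : FinCW X₁) (c₂ : FinCW X₂)
    (ω₁ : ClosedOneForm X₁) (ω₂ : ClosedOneForm X₂)
    (h : ω₁.catForm = 0) :
    (((ω₁.pullback (Prod.fst : X₁ × X₂ → X₁) continuous_fst)).add
      (ω₂.pullback (Prod.snd : X₁ × X₂ → X₂) continuous_snd)).catForm = 0 :=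
  catForm_product_zero_general X₁ X₂ c₁ ω₁ ω₂ h
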